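/- arXiv:2002.09207 — 5 statements merged into one kernel-verified Lean document; each statement's English description precedes it below -/
import Mathlib

section
/- Let Ω ⊆ ℝ^d be open and connected, and let τ : Ω → ℝ^d be a C¹ map with components τ₁,…,τ_d satisfying ∇τ_j · ∇τ_j = 1 on Ω for each j and ∇τ_j · ∇τ_k = 0 on Ω for all j ≠ k. Then τ is the restriction to Ω of a Euclidean isometry of ℝ^d, i.e. there exist an orthogonal matrix Q and a vector b such that τ(x) = Qx + b for all x ∈ Ω. -/
/-!
At every point the rows of `Dτ(x)` are the orthonormal gradients `∇τ_j`, so `Dτ(x)` is a linear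
isometry. By the inverse function theorem `τ` has a local inverse near each point, whose
derivative is again isometric; the mean value inequality makes `τ` and this inverse both
1-Lipschitz on small balls, so `τ` preserves distances on a ball around each point. A
distance-preserving map on a ball preserves inner products of differences from the centre, hence
is affine there. Thus `Dτ` is locally constant, hence constant on the connected set `Ω`, and `τ`
is affine with isometric linear part.
-/

open RealInnerProductSpace Metric Module Filter Topology

theorem IsPreconnected.apply_eq_of_eventually_eq {X Y : Type*} [TopologicalSpace X] {s : Set X}
    (hs : IsPreconnected s) {g : X → Y} (hg : ∀ c ∈ s, ∀ᶠ y in 𝓝 c, g y = g c)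
    {x y : X} (hx : x ∈ s) (hy : y ∈ s) : g x = g y := by
  have := isPreconnected_iff_preconnectedSpace.mp hs
  have hloc : IsLocallyConstant (s.domRestrict g) := (IsLocallyConstant.iff_eventually_eq _).2
    fun z => (continuous_subtype_val.tendsto z).eventually (hg z z.2)
  exact hloc.apply_eq_of_preconnectedSpace ⟨x, hx⟩ ⟨y, hy⟩

section Normed

variable {E F : Type*} [NormedAddCommGroup E] [NormedSpace ℝ E]
  [NormedAddCommGroup F] [NormedSpace ℝ F]

theorem LinearIsometryEquiv.hasFDerivAt_add_const (L : E ≃ₗᵢ[ℝ] F) (b : F) (x : E) :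
    HasFDerivAt (fun y => L y + b) (L.toContinuousLinearEquiv : E →L[ℝ] F) x :=
  (L.toContinuousLinearEquiv : E →L[ℝ] F).hasFDerivAt.add_const b

theorem Convex.lipschitzOnWith_one_of_hasFDerivAt_linearIsometryEquiv {f : E → F} {s : Set E}
    (hs : Convex ℝ s)
    (hf : ∀ x ∈ s, ∃ Q : E ≃ₗᵢ[ℝ] F, HasFDerivAt f (Q.toContinuousLinearEquiv : E →L[ℝ] F) x) :
    LipschitzOnWith 1 f s := by
  refine hs.lipschitzOnWith_of_nnnorm_fderiv_le
    (fun x hx => (hf x hx).elim fun _ hQ => hQ.differentiableAt) fun x hx => ?_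
  obtain ⟨Q, hQ⟩ := hf x hx
  rw [hQ.fderiv, ← NNReal.coe_le_coe, coe_nnnorm, NNReal.coe_one]
  exact Q.toLinearIsometry.norm_toContinuousLinearMap_le

variable [CompleteSpace E]

theorem exists_lipschitzOnWith_one_leftInverse {f : E → F} {Ω : Set E}
    (hΩ : IsOpen Ω) (hf : ContDiffOn ℝ 1 f Ω)
    (hQ : ∀ x ∈ Ω, ∃ Q : E ≃ₗᵢ[ℝ] F, HasFDerivAt f (Q.toContinuousLinearEquiv : E →L[ℝ] F) x)
    {c : E} (hc : c ∈ Ω) :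
    ∃ g : F → E, ∃ δ > 0, LipschitzOnWith 1 g (ball (f c) δ) ∧ ∀ᶠ x in 𝓝 c, g (f x) = x := by
  obtain ⟨Q, hQc⟩ := hQ c hc
  have hfc : ContDiffAt ℝ 1 f c := hf.contDiffAt (hΩ.mem_nhds hc)
  set φ := hfc.toOpenPartialHomeomorph f hQc one_ne_zero
  have hsrc : c ∈ φ.source := hfc.mem_toOpenPartialHomeomorph_source hQc one_ne_zero
  obtain ⟨δ, hδ, hball⟩ := Metric.isOpen_iff.1 (φ.isOpen_inter_preimage_symm hΩ) (f c)
    ⟨hfc.image_mem_toOpenPartialHomeomorph_target hQc one_ne_zero,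
      show φ.symm (φ c) ∈ Ω by rwa [φ.left_inv hsrc]⟩
  refine ⟨φ.symm, δ, hδ, (convex_ball _ _).lipschitzOnWith_one_of_hasFDerivAt_linearIsometryEquiv
    fun a ha => ?_, φ.eventually_left_inverse hsrc⟩
  obtain ⟨Qa, hQa⟩ := hQ (φ.symm a) (hball ha).2
  exact ⟨Qa.symm, φ.hasFDerivAt_symm (hball ha).1 hQa⟩

theorem exists_ball_dist_eq_of_hasFDerivAt_linearIsometryEquiv {f : E → F} {Ω : Set E}
    (hΩ : IsOpen Ω) (hf : ContDiffOn ℝ 1 f Ω)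
    (hQ : ∀ x ∈ Ω, ∃ Q : E ≃ₗᵢ[ℝ] F, HasFDerivAt f (Q.toContinuousLinearEquiv : E →L[ℝ] F) x)
    {c : E} (hc : c ∈ Ω) :
    ∃ r > 0, ball c r ⊆ Ω ∧ ∀ x ∈ ball c r, ∀ y ∈ ball c r, dist (f x) (f y) = dist x y := by
  obtain ⟨g, δ, hδ, hg, hgf⟩ := exists_lipschitzOnWith_one_leftInverse hΩ hf hQ hc
  have hnear : ∀ᶠ x in 𝓝 c, x ∈ Ω ∧ f x ∈ ball (f c) δ ∧ g (f x) = x :=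
    (hΩ.eventually_mem hc).and <|
      ((hf.continuousOn.continuousAt (hΩ.mem_nhds hc)).eventually (ball_mem_nhds _ hδ)).and hgf
  obtain ⟨r, hr, hsub⟩ := Metric.mem_nhds_iff.1 hnear
  have hf_lip : LipschitzOnWith 1 f (ball c r) :=
    (convex_ball c r).lipschitzOnWith_one_of_hasFDerivAt_linearIsometryEquiv
      fun x hx => hQ x (hsub hx).1
  refine ⟨r, hr, fun x hx => (hsub hx).1, fun x hx y hy => le_antisymm ?_ ?_⟩
  · simpa using hf_lip.dist_le_mul x hx y hy
  · calc dist x y = dist (g (f x)) (g (f y)) := by rw [(hsub hx).2.2, (hsub hy).2.2]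
      _ ≤ dist (f x) (f y) := by simpa using hg.dist_le_mul _ (hsub hx).2.1 _ (hsub hy).2.1

end Normed

section InnerProduct

variable {E F : Type*} [NormedAddCommGroup E] [InnerProductSpace ℝ E]
  [NormedAddCommGroup F] [InnerProductSpace ℝ F]

theorem Orthonormal.exists_orthonormalBasis_eq_of_card_eq [FiniteDimensional ℝ E] {ι : Type*}
    [Fintype ι] {v : ι → E} (hv : Orthonormal ℝ v) (card_ι : finrank ℝ E = Fintype.card ι) :
    ∃ b : OrthonormalBasis ι ℝ E, ⇑b = v := by
  obtain ⟨b, hb⟩ := Orthonormal.exists_orthonormalBasis_extension_of_card_eq card_ι (v := v)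
    (s := Set.univ) (hv.comp _ Subtype.val_injective)
  exact ⟨b, funext fun i => hb i trivial⟩

theorem real_inner_eq_of_norm_eq {u u' : E} {v v' : F} (hu : ‖u‖ = ‖v‖) (hu' : ‖u'‖ = ‖v'‖)
    (h : ‖u - u'‖ = ‖v - v'‖) : ⟪u, u'⟫ = ⟪v, v'⟫ := by
  have hE := norm_sub_sq_real u u'
  have hF := norm_sub_sq_real v v'
  rw [h, hu, hu'] at hE
  linarith

theorem exists_linearIsometryEquiv_add_of_dist_eq_on_ball [FiniteDimensional ℝ E]
    [FiniteDimensional ℝ F] (hEF : finrank ℝ E = finrank ℝ F) {f : E → F} {c : E} {r : ℝ}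
    (hr : 0 < r) (hf : ∀ x ∈ ball c r, ∀ y ∈ ball c r, dist (f x) (f y) = dist x y) :
    ∃ (L : E ≃ₗᵢ[ℝ] F) (b : F), ∀ x ∈ ball c r, f x = L x + b := by
  have hinner : ∀ x ∈ ball c r, ∀ y ∈ ball c r, ⟪f x - f c, f y - f c⟫ = ⟪x - c, y - c⟫ :=
    fun x hx y hy => real_inner_eq_of_norm_eq
      (by simpa [dist_eq_norm] using hf x hx c (mem_ball_self hr))
      (by simpa [dist_eq_norm] using hf y hy c (mem_ball_self hr))
      (by simpa [dist_eq_norm] using hf x hx y hy)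
  set e := stdOrthonormalBasis ℝ E
  set p : Fin (finrank ℝ E) → E := fun i => c + (r / 2) • e i
  have hp : ∀ i, p i ∈ ball c r := fun i => by
    simpa [p, norm_smul, abs_of_pos hr] using hr
  set q : Fin (finrank ℝ E) → F := fun i => (2 / r) • (f (p i) - f c)
  have hq : ∀ i, ∀ x ∈ ball c r, ⟪q i, f x - f c⟫ = ⟪e i, x - c⟫ := fun i x hx => by
    rw [real_inner_smul_left, hinner _ (hp i) x hx]
    simp only [p, add_sub_cancel_left, real_inner_smul_left]
    field_simp
  have hq_orth : Orthonormal ℝ q := by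
    rw [orthonormal_iff_ite]
    intro i j
    rw [real_inner_smul_right, hq i _ (hp j)]
    simp only [p, add_sub_cancel_left, real_inner_smul_right]
    field_simp
    exact orthonormal_iff_ite.mp e.orthonormal i j
  obtain ⟨b, hb⟩ := hq_orth.exists_orthonormalBasis_eq_of_card_eq (by simp [hEF])
  set L := e.repr.trans b.repr.symm
  refine ⟨L, f c - L c, fun x hx => ?_⟩
  have hrepr : b.repr (f x - f c) = e.repr (x - c) := by
    ext i
    rw [b.repr_apply_apply, e.repr_apply_apply, hb, hq i x hx]
  have hdiff : f x - f c = L (x - c) := by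
    rw [LinearIsometryEquiv.trans_apply, ← hrepr, LinearIsometryEquiv.symm_apply_apply]
  rw [map_sub, sub_eq_iff_eq_add] at hdiff
  rw [hdiff]
  abel

variable [FiniteDimensional ℝ E] [FiniteDimensional ℝ F]

theorem eventually_fderiv_eq_of_hasFDerivAt_linearIsometryEquiv {f : E → F} {Ω : Set E}
    (hΩ : IsOpen Ω) (hf : ContDiffOn ℝ 1 f Ω)
    (hQ : ∀ x ∈ Ω, ∃ Q : E ≃ₗᵢ[ℝ] F, HasFDerivAt f (Q.toContinuousLinearEquiv : E →L[ℝ] F) x)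
    {c : E} (hc : c ∈ Ω) : ∀ᶠ x in 𝓝 c, fderiv ℝ f x = fderiv ℝ f c := by
  obtain ⟨r, hr, -, hdist⟩ := exists_ball_dist_eq_of_hasFDerivAt_linearIsometryEquiv hΩ hf hQ hc
  obtain ⟨Q, -⟩ := hQ c hc
  obtain ⟨L, b, hL⟩ :=
    exists_linearIsometryEquiv_add_of_dist_eq_on_ball Q.toLinearEquiv.finrank_eq hr hdist
  have hfderiv : ∀ x ∈ ball c r, fderiv ℝ f x = L.toContinuousLinearEquiv := fun x hx =>
    ((L.hasFDerivAt_add_const b x).congr_of_eventuallyEq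
      (eventually_of_mem (isOpen_ball.mem_nhds hx) hL)).fderiv
  filter_upwards [ball_mem_nhds c hr] with x hx
  rw [hfderiv x hx, hfderiv c (mem_ball_self hr)]

theorem exists_linearIsometryEquiv_add_of_hasFDerivAt_linearIsometryEquiv {f : E → F}
    {Ω : Set E} (hΩ : IsOpen Ω) (hconn : IsConnected Ω) (hf : ContDiffOn ℝ 1 f Ω)
    (hQ : ∀ x ∈ Ω, ∃ Q : E ≃ₗᵢ[ℝ] F, HasFDerivAt f (Q.toContinuousLinearEquiv : E →L[ℝ] F) x) :
    ∃ (Q : E ≃ₗᵢ[ℝ] F) (b : F), ∀ x ∈ Ω, f x = Q x + b := by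
  obtain ⟨x₀, hx₀⟩ := hconn.nonempty
  obtain ⟨Q, hQ₀⟩ := hQ x₀ hx₀
  have hconst : ∀ x ∈ Ω, fderiv ℝ f x = Q.toContinuousLinearEquiv := fun x hx =>
    (hconn.isPreconnected.apply_eq_of_eventually_eq
      (fun c hc => eventually_fderiv_eq_of_hasFDerivAt_linearIsometryEquiv hΩ hf hQ hc)
      hx hx₀).trans hQ₀.fderiv
  have hQb := Q.hasFDerivAt_add_const (f x₀ - Q x₀)
  refine ⟨Q, f x₀ - Q x₀, fun x hx => hΩ.eqOn_of_fderiv_eq hconn.isPreconnected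
    (hf.differentiableOn one_ne_zero) (fun y _ => (hQb y).differentiableAt.differentiableWithinAt)
    (fun y hy => (hconst y hy).trans (hQb y).fderiv.symm) hx₀ (by abel) hx⟩

end InnerProduct

section EuclideanSpace

variable {E ι : Type*} [NormedAddCommGroup E] [InnerProductSpace ℝ E] [Fintype ι]

theorem inner_gradient_apply_eq_fderiv_apply [CompleteSpace E] {τ : E → EuclideanSpace ℝ ι}
    {x : E} (hτ : DifferentiableAt ℝ τ x) (j : ι) (v : E) :
    ⟪gradient (fun y => τ y j) x, v⟫ = fderiv ℝ τ x v j := by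
  have hj : HasFDerivAt (fun y => τ y j) ((PiLp.proj 2 (fun _ => ℝ) j).comp (fderiv ℝ τ x)) x :=
    (PiLp.hasFDerivAt_apply (𝕜 := ℝ) 2 (τ x) j).comp x hτ.hasFDerivAt
  rw [inner_gradient_left, hj.fderiv]
  rfl

theorem exists_hasFDerivAt_linearIsometryEquiv_of_orthonormal_gradient [FiniteDimensional ℝ E]
    (hcard : finrank ℝ E = Fintype.card ι) {τ : E → EuclideanSpace ℝ ι} {x : E}
    (hτ : DifferentiableAt ℝ τ x) (h : Orthonormal ℝ fun j => gradient (fun y => τ y j) x) :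
    ∃ Q : E ≃ₗᵢ[ℝ] EuclideanSpace ℝ ι,
      HasFDerivAt τ (Q.toContinuousLinearEquiv : E →L[ℝ] EuclideanSpace ℝ ι) x := by
  obtain ⟨b, hb⟩ := h.exists_orthonormalBasis_eq_of_card_eq hcard
  refine ⟨b.repr, ?_⟩
  suffices hfd : (b.repr.toContinuousLinearEquiv : E →L[ℝ] EuclideanSpace ℝ ι) = fderiv ℝ τ x by
    rw [hfd]
    exact hτ.hasFDerivAt
  ext v j
  rw [← inner_gradient_apply_eq_fderiv_apply hτ, ← congrFun hb j]
  exact b.repr_apply_apply v j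

end EuclideanSpace

/-- A C¹ map on a connected open set Ω ⊆ ℝ^d whose component gradients are
pointwise orthonormal is the restriction of a Euclidean isometry x ↦ Qx + b. -/
theorem stmt_3 {d : ℕ} (Ω : Set (EuclideanSpace ℝ (Fin d)))
    (hΩ : IsOpen Ω) (hconn : IsConnected Ω)
    (τ : EuclideanSpace ℝ (Fin d) → EuclideanSpace ℝ (Fin d))
    (hC1 : ContDiffOn ℝ 1 τ Ω)
    (horth : ∀ x ∈ Ω, ∀ j k : Fin d,
      ⟪gradient (fun y => τ y j) x, gradient (fun y => τ y k) x⟫ =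
        if j = k then (1 : ℝ) else 0) :
    ∃ (Q : EuclideanSpace ℝ (Fin d) ≃ₗᵢ[ℝ] EuclideanSpace ℝ (Fin d))
      (b : EuclideanSpace ℝ (Fin d)), ∀ x ∈ Ω, τ x = Q x + b := by
  refine exists_linearIsometryEquiv_add_of_hasFDerivAt_linearIsometryEquiv hΩ hconn hC1
    fun x hx => ?_
  have hτ : DifferentiableAt ℝ τ x :=
    (hC1.differentiableOn one_ne_zero).differentiableAt (hΩ.mem_nhds hx)
  exact exists_hasFDerivAt_linearIsometryEquiv_of_orthonormal_gradient (by simp) hτ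
    (orthonormal_iff_ite.mpr (horth x hx))
end

section
/- Let ω₁, ω₂ ⊆ ℝ^d be open sets and let U : C₀(ω₁) → C_b(ω₂) be a nonzero bounded linear operator satisfying: f·g = 0 implies (Uf)·(Ug) = 0 for all f, g ∈ C₀(ω₁). Let ω₂' := {y ∈ ω₂ : ∃ f ∈ C₀(ω₁) with (Uf)(y) ≠ 0}. Then ω₂' is open and nonempty, and there exist functions h : ω₂' → ℂ \ {0} and τ : ω₂' → ω₁, both continuous, such that (Uf)(y) = h(y) f(τ(y)) for all y ∈ ω₂' and all f ∈ C₀(ω₁). -/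
/-!
For `y` in `ω₂'` the functional `φ = δ_y ∘ U` is nonzero and disjointness preserving. Such a
functional has a support point `x`: otherwise every point has a neighbourhood on which `φ`
vanishes, a partition of unity makes `φ` vanish on all compactly supported functions, and these
are dense. If `f x = 0`, then `f` is uniformly close to functions vanishing near `x`; these are
disjoint from some `ψ` supported near `x` with `φ ψ ≠ 0`, hence killed by `φ`. So `φ = c δ_x`.
Testing `U` on bump functions around `τ y` gives the continuity of `τ` and `h`.
-/

open scoped ZeroAtInfty
open Set Function Filter Topology

theorem Continuous.apply_eq_of_forall_dist_le {α β : Type*} [PseudoMetricSpace α]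
    [TopologicalSpace β] [T1Space β] {φ : α → β} (hφ : Continuous φ) {a : α} {b : β}
    (h : ∀ ε > 0, ∃ a', φ a' = b ∧ dist a a' ≤ ε) : φ a = b :=
  (isClosed_singleton.preimage hφ).closure_subset <| Metric.mem_closure_iff.2 fun ε hε =>
    let ⟨a', ha', hdist⟩ := h (ε / 2) (half_pos hε)
    ⟨a', ha', hdist.trans_lt (half_lt_self hε)⟩

variable {X : Type*} [TopologicalSpace X]

namespace ZeroAtInftyContinuousMap

theorem norm_le_of_forall_norm_apply_le {f : C₀(X, ℂ)} {C : ℝ} (hC : 0 ≤ C)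
    (h : ∀ x, ‖f x‖ ≤ C) : ‖f‖ ≤ C := by
  rw [← norm_toBCF_eq_norm]
  exact (BoundedContinuousFunction.norm_le hC).2 h

theorem exists_one_zero_of_isCompact [RegularSpace X] [LocallyCompactSpace X] {K O : Set X}
    (hK : IsCompact K) (hO : IsOpen O) (hKO : K ⊆ O) :
    ∃ χ : C₀(X, ℂ), HasCompactSupport χ ∧ EqOn χ 1 K ∧ EqOn χ 0 Oᶜ ∧
      ∀ x, ‖χ x‖ ≤ 1 ∧ ‖1 - χ x‖ ≤ 1 := by
  obtain ⟨χ, hχ1, hχ0, hχc, hχI⟩ := exists_continuous_one_zero_of_isCompact hK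
    hO.isClosed_compl (disjoint_compl_right_iff_subset.2 hKO)
  have hc : HasCompactSupport fun x => (χ x : ℂ) := hχc.comp_left Complex.ofReal_zero
  refine ⟨⟨⟨fun x => (χ x : ℂ), by fun_prop⟩, hc.is_zero_at_infty⟩, hc,
    fun x hx => by simp [hχ1 hx], fun x hx => by simp [hχ0 hx], fun x => ?_⟩
  obtain ⟨h0, h1⟩ := hχI x
  simp only [ZeroAtInftyContinuousMap.coe_mk, ← Complex.ofReal_one,
    ← Complex.ofReal_sub, Complex.norm_real, Real.norm_eq_abs, abs_le]
  constructor <;> constructor <;> linarith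

end ZeroAtInftyContinuousMap

open ZeroAtInftyContinuousMap

section Functional

variable (φ : C₀(X, ℂ) →L[ℂ] ℂ)

def VanishesOn (s : Set X) : Prop :=
  ∀ f : C₀(X, ℂ), support f ⊆ s → φ f = 0

def IsSupportPoint (x : X) : Prop :=
  ∀ V ∈ 𝓝 x, ¬ VanishesOn φ V

variable {φ}

theorem VanishesOn.mono {s t : Set X} (h : VanishesOn φ t) (hst : s ⊆ t) : VanishesOn φ s :=
  fun f hf => h f (hf.trans hst)

theorem vanishesOn_empty : VanishesOn φ ∅ := fun f hf => by
  rw [show f = 0 from ext fun x => by simpa using support_subset_iff'.1 hf x, map_zero]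

variable [T2Space X] [LocallyCompactSpace X]

theorem VanishesOn.union_of_isCompact {K O s : Set X} (hK : IsCompact K) (hO : IsOpen O)
    (hKO : K ⊆ O) (hφO : VanishesOn φ O) (hφs : VanishesOn φ s) : VanishesOn φ (K ∪ s) := by
  intro f hf
  obtain ⟨χ, -, hχ1, hχ0, -⟩ := exists_one_zero_of_isCompact hK hO hKO
  have hfχ : φ (f * χ) = 0 := hφO _ fun x hx => by
    by_contra hxO
    exact hx (by simp [hχ0 hxO])
  have hrest : φ (f - f * χ) = 0 := hφs _ fun x hx => by
    have hfx : f x ≠ 0 := fun h => hx (by simp [h])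
    have hxK : x ∉ K := fun h => hx (by simp [hχ1 h])
    exact (hf hfx).resolve_left hxK
  rw [← sub_add_cancel f (f * χ), map_add, hfχ, hrest, add_zero]

theorem vanishesOn_biUnion {ι : Type*} (t : Finset ι) {C O : ι → Set X}
    (hC : ∀ i ∈ t, IsCompact (C i)) (hO : ∀ i ∈ t, IsOpen (O i)) (hCO : ∀ i ∈ t, C i ⊆ O i)
    (hφO : ∀ i ∈ t, VanishesOn φ (O i)) : VanishesOn φ (⋃ i ∈ t, C i) := by
  classical
  induction t using Finset.induction_on with
  | empty => simpa using vanishesOn_empty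
  | insert i t _ ih =>
    simp only [Finset.forall_mem_insert] at hC hO hCO hφO
    rw [Finset.set_biUnion_insert]
    exact hφO.1.union_of_isCompact hC.1 hO.1 hCO.1 (ih hC.2 hO.2 hCO.2 hφO.2)

theorem vanishesOn_of_isCompact {K : Set X} (hK : IsCompact K)
    (h : ∀ x ∈ K, ∃ V ∈ 𝓝 x, VanishesOn φ V) : VanishesOn φ K := by
  choose! V hV hφV using h
  obtain ⟨t, htK, hKt⟩ := hK.elim_nhds_subcover (fun x => interior (V x))
    fun x hx => interior_mem_nhds.2 (hV x hx)
  obtain ⟨C, hC, hCV, hKC⟩ := hK.finite_compact_cover t _ (fun _ _ => isOpen_interior) hKt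
  rw [hKC]
  exact vanishesOn_biUnion t (fun i _ => hC i) (fun _ _ => isOpen_interior) (fun i _ => hCV i)
    fun i hi => (hφV i (htK i hi)).mono interior_subset

theorem eq_zero_of_forall_vanishesOn (h : ∀ K, IsCompact K → VanishesOn φ K) : φ = 0 := by
  ext f
  refine φ.continuous.apply_eq_of_forall_dist_le fun ε hε => ?_
  obtain ⟨K, hK, hKf⟩ := mem_cocompact.1 (zero_at_infty f (Metric.ball_mem_nhds 0 hε))
  obtain ⟨χ, hχc, hχ1, -, hχb⟩ := exists_one_zero_of_isCompact hK isOpen_univ (subset_univ K)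
  refine ⟨f * χ, h _ hχc _ (fun x hx => subset_tsupport χ (right_ne_zero_of_mul hx)), ?_⟩
  rw [dist_eq_norm]
  refine norm_le_of_forall_norm_apply_le hε.le fun x => ?_
  rw [ZeroAtInftyContinuousMap.sub_apply, mul_apply, ← mul_one_sub]
  by_cases hx : x ∈ K
  · simp [hχ1 hx, hε.le]
  · have hfx : ‖f x‖ < ε := by simpa using hKf hx
    simpa using norm_mul_le_of_le hfx.le (hχb x).2

theorem exists_isSupportPoint (hφ : φ ≠ 0) : ∃ x, IsSupportPoint φ x := by
  by_contra! h
  simp only [IsSupportPoint, not_forall, not_not] at h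
  exact hφ (eq_zero_of_forall_vanishesOn fun K hK =>
    vanishesOn_of_isCompact hK fun x _ => by simpa using h x)

theorem IsSupportPoint.map_eq_zero
    (hdisj : ∀ f g : C₀(X, ℂ), (∀ x, f x * g x = 0) → φ f * φ g = 0)
    {x₀ : X} (hx₀ : IsSupportPoint φ x₀) {f : C₀(X, ℂ)} (hf : f x₀ = 0) : φ f = 0 := by
  refine φ.continuous.apply_eq_of_forall_dist_le fun ε hε => ?_
  set V := {x | ‖f x‖ < ε}
  have hV : IsOpen V := isOpen_lt (map_continuous f).norm continuous_const
  obtain ⟨C, hC, hCV, hCc⟩ :=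
    LocallyCompactSpace.local_compact_nhds x₀ V (hV.mem_nhds (by simp [V, hf, hε]))
  obtain ⟨χ, -, hχ1, hχ0, hχb⟩ := exists_one_zero_of_isCompact hCc hV hCV
  obtain ⟨ψ, hψC, hψ⟩ : ∃ ψ : C₀(X, ℂ), support ψ ⊆ interior C ∧ φ ψ ≠ 0 := by
    simpa [VanishesOn] using hx₀ _ (interior_mem_nhds.2 hC)
  refine ⟨f - f * χ, ?_, ?_⟩
  · refine (mul_eq_zero.1 (hdisj _ ψ fun x => ?_)).resolve_right hψ
    by_cases hx : ψ x = 0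
    · simp [hx]
    · simp [hχ1 (interior_subset (hψC hx))]
  · rw [dist_eq_norm, sub_sub_cancel]
    refine norm_le_of_forall_norm_apply_le hε.le fun x => ?_
    by_cases hx : x ∈ V
    · simpa using norm_mul_le_of_le (le_of_lt hx) (hχb x).1
    · simp [hχ0 hx, hε.le]

theorem exists_eq_mul_eval
    (hdisj : ∀ f g : C₀(X, ℂ), (∀ x, f x * g x = 0) → φ f * φ g = 0) (hφ : φ ≠ 0) :
    ∃ (x : X) (c : ℂ), c ≠ 0 ∧ ∀ f, φ f = c * f x := by
  obtain ⟨x, hx⟩ := exists_isSupportPoint hφ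
  obtain ⟨e, -, he, -, -⟩ := exists_one_zero_of_isCompact isCompact_singleton isOpen_univ
    (subset_univ {x})
  have hrep : ∀ f, φ f = φ e * f x := fun f => by
    have := hx.map_eq_zero hdisj (f := f - f x • e) (by simp [he rfl])
    rw [map_sub, map_smul, smul_eq_mul, sub_eq_zero] at this
    rw [this, mul_comm]
  exact ⟨x, φ e, fun h0 => hφ (ContinuousLinearMap.ext fun f => by simp [hrep f, h0]), hrep⟩

end Functional

section WeightedComposition

variable [T2Space X] [LocallyCompactSpace X] {Y : Type*} [TopologicalSpace Y] {S : Set Y}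
  {u : C₀(X, ℂ) → Y → ℂ} {w : Y → ℂ} {τ : Y → X}

theorem continuousOn_of_eq_mul_comp (hu : ∀ f, Continuous (u f)) (hw : ∀ y ∈ S, w y ≠ 0)
    (hrep : ∀ y ∈ S, ∀ f, u f y = w y * f (τ y)) : ContinuousOn τ S := by
  intro y₀ hy₀
  rw [ContinuousWithinAt, (nhds_basis_opens _).tendsto_right_iff]
  rintro O ⟨hO₀, hO⟩
  obtain ⟨χ, -, hχ1, hχ0, -⟩ := exists_one_zero_of_isCompact isCompact_singleton hO
    (singleton_subset_iff.2 hO₀)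
  have hne : u χ y₀ ≠ 0 := by simp [hrep y₀ hy₀, hχ1 rfl, hw y₀ hy₀]
  filter_upwards [nhdsWithin_le_nhds ((hu χ).continuousAt.eventually_ne hne),
    self_mem_nhdsWithin] with y hy hyS
  by_contra hyO
  exact hy (by simp [hrep y hyS, hχ0 hyO])

theorem continuousOn_weight_of_eq_mul_comp (hu : ∀ f, Continuous (u f))
    (hτ : ContinuousOn τ S) (hrep : ∀ y ∈ S, ∀ f, u f y = w y * f (τ y)) :
    ContinuousOn w S := by
  intro y₀ hy₀
  obtain ⟨C, hC, hCn⟩ := exists_compact_mem_nhds (τ y₀)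
  obtain ⟨χ, -, hχ1, -, -⟩ := exists_one_zero_of_isCompact hC isOpen_univ (subset_univ C)
  have heq : u χ =ᶠ[𝓝[S] y₀] w := by
    filter_upwards [hτ y₀ hy₀ (interior_mem_nhds.2 hCn), self_mem_nhdsWithin] with y hyC hyS
    simp [hrep y hyS, hχ1 (interior_subset hyC)]
  exact ((hu χ).continuousWithinAt.congr_of_eventuallyEq heq.symm
    (by simp [hrep y₀ hy₀, hχ1 (mem_of_mem_nhds hCn)]))

end WeightedComposition

theorem stmt_7_general {d : ℕ} (ω₁ ω₂ : Set (EuclideanSpace ℝ (Fin d)))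
    (h₁ : IsOpen ω₁)
    (U : C₀(ω₁, ℂ) →L[ℂ] BoundedContinuousFunction ω₂ ℂ) (hU0 : U ≠ 0)
    (hdisj : ∀ f g : C₀(ω₁, ℂ), (∀ x, f x * g x = 0) →
      ∀ y, U f y * U g y = 0) :
    IsOpen {y : ω₂ | ∃ f : C₀(ω₁, ℂ), U f y ≠ 0} ∧
    {y : ω₂ | ∃ f : C₀(ω₁, ℂ), U f y ≠ 0}.Nonempty ∧
    ∃ (h : ω₂ → ℂ) (τ : ω₂ → ω₁),
      ContinuousOn h {y : ω₂ | ∃ f : C₀(ω₁, ℂ), U f y ≠ 0} ∧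
      ContinuousOn τ {y : ω₂ | ∃ f : C₀(ω₁, ℂ), U f y ≠ 0} ∧
      (∀ y ∈ {y : ω₂ | ∃ f : C₀(ω₁, ℂ), U f y ≠ 0}, h y ≠ 0) ∧
      ∀ y ∈ {y : ω₂ | ∃ f : C₀(ω₁, ℂ), U f y ≠ 0},
        ∀ f : C₀(ω₁, ℂ), U f y = h y * f (τ y) := by
  have : LocallyCompactSpace ω₁ := h₁.locallyCompactSpace
  set S := {y : ω₂ | ∃ f : C₀(ω₁, ℂ), U f y ≠ 0}
  have hS : IsOpen S := by
    simp only [S, ofPred_exists]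
    exact isOpen_iUnion fun f => isOpen_ne_fun (U f).continuous continuous_const
  have hrep : ∀ y ∈ S, ∃ (x : ω₁) (c : ℂ), c ≠ 0 ∧ ∀ f, U f y = c * f x :=
    fun y ⟨f, hf⟩ => exists_eq_mul_eval (φ := (BoundedContinuousFunction.evalCLM ℂ y).comp U)
      (fun f g hfg => hdisj f g hfg y) (DFunLike.ne_iff.2 ⟨f, hf⟩)
  obtain ⟨f₀, hf₀⟩ := DFunLike.ne_iff.1 hU0
  obtain ⟨y₀, hy₀⟩ := DFunLike.ne_iff.1 hf₀
  obtain ⟨x₀, -⟩ := hrep y₀ ⟨f₀, hy₀⟩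
  have : Nonempty ω₁ := ⟨x₀⟩
  choose! τ c hc hτc using hrep
  have hτ := continuousOn_of_eq_mul_comp (fun f => (U f).continuous) hc hτc
  exact ⟨hS, ⟨y₀, f₀, hy₀⟩, c, τ,
    continuousOn_weight_of_eq_mul_comp (fun f => (U f).continuous) hτ hτc, hτ, hc, hτc⟩

/-- A nonzero bounded linear disjointness-preserving operator
U : C₀(ω₁) → C_b(ω₂) acts, on the open nonempty set ω₂' where it does not
vanish, as a weighted composition operator Uf(y) = h(y)·f(τ(y)) with
continuous h ≠ 0 and continuous τ : ω₂' → ω₁. -/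
theorem stmt_7 {d : ℕ} (ω₁ ω₂ : Set (EuclideanSpace ℝ (Fin d)))
    (h₁ : IsOpen ω₁) (h₂ : IsOpen ω₂)
    (U : C₀(ω₁, ℂ) →L[ℂ] BoundedContinuousFunction ω₂ ℂ) (hU0 : U ≠ 0)
    (hdisj : ∀ f g : C₀(ω₁, ℂ), (∀ x, f x * g x = 0) →
      ∀ y, U f y * U g y = 0) :
    IsOpen {y : ω₂ | ∃ f : C₀(ω₁, ℂ), U f y ≠ 0} ∧
    {y : ω₂ | ∃ f : C₀(ω₁, ℂ), U f y ≠ 0}.Nonempty ∧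
    ∃ (h : ω₂ → ℂ) (τ : ω₂ → ω₁),
      ContinuousOn h {y : ω₂ | ∃ f : C₀(ω₁, ℂ), U f y ≠ 0} ∧
      ContinuousOn τ {y : ω₂ | ∃ f : C₀(ω₁, ℂ), U f y ≠ 0} ∧
      (∀ y ∈ {y : ω₂ | ∃ f : C₀(ω₁, ℂ), U f y ≠ 0}, h y ≠ 0) ∧
      ∀ y ∈ {y : ω₂ | ∃ f : C₀(ω₁, ℂ), U f y ≠ 0},
        ∀ f : C₀(ω₁, ℂ), U f y = h y * f (τ y) :=
  stmt_7_general ω₁ ω₂ h₁ U hU0 hdisj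
end

section
/- Let ω₁, ω₂ be disjoint bounded open subsets of ℝ^d that are isometric to each other (there is a Euclidean isometry mapping ω₁ onto ω₂), and let Ω ⊆ ℝ^d be a bounded connected open set with closure(Ω) = closure(ω₁) ∪ closure(ω₂). Let Γ be a connected component of ∂Ω with diam Γ = diam Ω. Then Γ meets both ∂ω₁ and ∂ω₂, and there is a point z ∈ ∂ω₁ ∩ ∂ω₂ ∩ Γ. -/
/-!
If `Γ` missed `closure ω₁`, it would lie in `closure ω₂`, so `diam ω₁ = diam ω₂ ≥ diam Γ = diam Ω`
and `closure ω₁` would contain a diameter `(a, b)` of `K = closure Ω`. In dimension `≥ 2` all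
endpoints of diameters of a compact connected `K` lie in one component of `∂K`, hence `a ∈ Γ`.
Indeed the ray from such an endpoint away from its partner leaves `K` at once and reaches the
connected region outside a large ball, so the endpoints lie in the closure of one component `W`
of `Kᶜ`, and `∂W ⊆ ∂K`. Were two of them separated in `∂K`, a Urysohn function `f` equal to `0`
or `1` on `∂K` would make `e^{iπf}` on `closure W`, `e^{-iπf}` off it, a continuous map to the
circle; its real lift `θ` has `θ - πf` constant on `closure W` and `θ + πf` constant on `K`, so
`f` would take the same value at both points. Being connected and meeting both closures, `Γ`
meets `closure ω₁ ∩ closure ω₂ ⊆ ∂ω₁ ∩ ∂ω₂`. In dimension `≤ 1` a connected subset of `∂Ω` is a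
point, which `diam Γ = diam Ω > 0` excludes.
-/

open Set Metric Bornology Topology

section Topology

variable {X : Type*} [TopologicalSpace X]

theorem nontrivial_of_nonempty_of_frontier_nonempty {s : Set X} (hs : s.Nonempty)
    (hfr : (frontier s).Nonempty) : Nontrivial X := by
  by_contra hX
  rw [not_nontrivial_iff_subsingleton] at hX
  obtain ⟨x, hx⟩ := hs
  have hs : s = univ := eq_univ_of_forall fun y => Subsingleton.elim x y ▸ hx
  rw [hs, frontier_univ] at hfr
  exact hfr.ne_empty rfl

theorem IsClosed.connectedComponentIn {F : Set X} (hF : IsClosed F) (x : X) :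
    IsClosed (connectedComponentIn F x) := by
  by_cases hx : x ∈ F
  · refine closure_subset_iff_isClosed.1 <|
      isPreconnected_connectedComponentIn.closure.subset_connectedComponentIn
        (subset_closure (mem_connectedComponentIn hx))
        (closure_minimal (connectedComponentIn_subset F x) hF)
  · rw [connectedComponentIn_eq_empty hx]
    exact isClosed_empty

theorem frontier_connectedComponentIn_subset [LocallyConnectedSpace X] {U : Set X}
    (hU : IsOpen U) (x : X) : frontier (connectedComponentIn U x) ⊆ frontier U := by
  intro z hz
  have hW : IsOpen (connectedComponentIn U x) := hU.connectedComponentIn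
  refine ⟨closure_mono (connectedComponentIn_subset U x) hz.1, fun hzU => ?_⟩
  rw [hU.interior_eq] at hzU
  obtain ⟨w, hwz, hwx⟩ := _root_.mem_closure_iff.1 hz.1 _ hU.connectedComponentIn
    (mem_connectedComponentIn hzU)
  refine hz.2 ?_
  rw [hW.interior_eq, connectedComponentIn_eq hwx, ← connectedComponentIn_eq hwz]
  exact mem_connectedComponentIn hzU

theorem exists_continuous_zero_one_of_notMem_connectedComponentIn [T4Space X] {F : Set X}
    (hF : IsCompact F) {a x : X} (ha : a ∈ F) (hx : x ∈ F)
    (hax : a ∉ connectedComponentIn F x) :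
    ∃ f : X → ℝ, Continuous f ∧ (∀ z ∈ F, f z = 0 ∨ f z = 1) ∧ f x = 0 ∧ f a = 1 := by
  have : CompactSpace F := isCompact_iff_compactSpace.1 hF
  have hax' : (⟨a, ha⟩ : F) ∉ connectedComponent (⟨x, hx⟩ : F) := fun h =>
    hax (connectedComponentIn_eq_image hx ▸ ⟨_, h, rfl⟩)
  rw [connectedComponent_eq_iInter_isClopen] at hax'
  simp only [mem_iInter, not_forall] at hax'
  obtain ⟨⟨Z, hZ, hxZ⟩, haZ⟩ := hax'
  have hval := hF.isClosed.isClosedEmbedding_subtypeVal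
  obtain ⟨f, hf0, hf1, -⟩ := exists_continuous_zero_one_of_isClosed
    (hval.isClosedMap _ hZ.isClosed) (hval.isClosedMap _ hZ.compl.isClosed)
    ((disjoint_image_iff Subtype.val_injective).2 disjoint_compl_right)
  refine ⟨f, f.continuous, fun z hz => ?_, hf0 ⟨_, hxZ, rfl⟩, hf1 ⟨_, haZ, rfl⟩⟩
  by_cases hzZ : (⟨z, hz⟩ : F) ∈ Z
  · exact .inl (hf0 ⟨_, hzZ, rfl⟩)
  · exact .inr (hf1 ⟨_, hzZ, rfl⟩)

theorem IsPreconnected.frontier_inter_frontier_inter_nonempty {Γ U V : Set X}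
    (hΓ : IsPreconnected Γ) (hU : IsOpen U) (hV : IsOpen V) (hUV : Disjoint U V)
    (hΓUV : Γ ⊆ closure U ∪ closure V) (hΓU : (Γ ∩ closure U).Nonempty)
    (hΓV : (Γ ∩ closure V).Nonempty) : (frontier U ∩ frontier V ∩ Γ).Nonempty := by
  obtain ⟨z, hzΓ, hzU, hzV⟩ :=
    isPreconnected_closed_iff.1 hΓ _ _ isClosed_closure isClosed_closure hΓUV hΓU hΓV
  refine ⟨z, ⟨?_, ?_⟩, hzΓ⟩
  · rw [hU.frontier_eq]
    exact ⟨hzU, fun h => (hUV.symm.closure_left hU).ne_of_mem hzV h rfl⟩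
  · rw [hV.frontier_eq]
    exact ⟨hzV, fun h => (hUV.closure_left hV).ne_of_mem hzU h rfl⟩

variable [SimplyConnectedSpace X] [LocallyPathConnectedSpace X]

theorem apply_eq_of_mem_inter_closure_of_int_on_frontier {A C : Set X} (hA : IsPreconnected A)
    (hC : IsPreconnected C) (hAC : Disjoint A (interior C)) {f : X → ℝ} (hf : Continuous f)
    (hfC : ∀ z ∈ frontier C, ∃ m : ℤ, f z = m) {a x : X} (ha : a ∈ A ∩ closure C)
    (hx : x ∈ A ∩ closure C) : f a = f x := by
  classical
  have hagree : ∀ z ∈ frontier C,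
      Circle.exp (Real.pi * f z) = Circle.exp (-(Real.pi * f z)) := by
    intro z hz
    obtain ⟨m, hm⟩ := hfC z hz
    exact Circle.exp_eq_exp.2 ⟨m, by rw [hm]; ring⟩
  set g : X → Circle := (closure C).piecewise (fun z => Circle.exp (Real.pi * f z))
    (fun z => Circle.exp (-(Real.pi * f z)))
  have hg : Continuous g := Continuous.piecewise
    (fun z hz => hagree z (frontier_closure_subset hz)) (by fun_prop) (by fun_prop)
  obtain ⟨θ, -, hθ⟩ := (Circle.isCoveringMap_exp.existsUnique_continuousMap_lifts ⟨g, hg⟩ a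
    _ (Circle.exp_arg (g a))).exists
  have hAg : ∀ z ∈ A, g z = Circle.exp (-(Real.pi * f z)) := by
    intro z hz
    by_cases hzC : z ∈ closure C
    · simp only [g, Set.piecewise_eq_of_mem _ _ _ hzC]
      exact hagree z ⟨hzC, fun hi => hAC.ne_of_mem hz hi rfl⟩
    · simp only [g, Set.piecewise_eq_of_notMem _ _ _ hzC]
  have hdisc : IsDiscrete (AddSubgroup.zmultiples (2 * Real.pi) : Set ℝ) :=
    SetLike.isDiscrete_iff_discreteTopology.2 inferInstance
  have hmem : ∀ r : ℝ, Circle.exp r = 1 → r ∈ AddSubgroup.zmultiples (2 * Real.pi) := by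
    intro r hr
    obtain ⟨m, rfl⟩ := Circle.exp_eq_one.1 hr
    exact ⟨m, by simp [zsmul_eq_mul]⟩
  have hCconst : θ a - Real.pi * f a = θ x - Real.pi * f x := by
    refine hC.closure.constant_of_mapsTo (f := fun z => θ z - Real.pi * f z) hdisc
      (by fun_prop) (fun z hz => hmem _ ?_) ha.2 hx.2
    rw [Circle.exp_sub, ← Function.comp_apply (f := Circle.exp), hθ]
    simp [g, Set.piecewise_eq_of_mem _ _ _ hz]
  have hAconst : θ a + Real.pi * f a = θ x + Real.pi * f x := by
    refine hA.constant_of_mapsTo (f := fun z => θ z + Real.pi * f z) hdisc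
      (by fun_prop) (fun z hz => hmem _ ?_) ha.1 hx.1
    rw [Circle.exp_add, ← Function.comp_apply (f := Circle.exp), hθ]
    simp [hAg z hz]
  exact mul_left_cancel₀ Real.pi_ne_zero (by linarith)

theorem mem_connectedComponentIn_of_frontier_subset [T4Space X] {A C F : Set X}
    (hA : IsPreconnected A) (hC : IsPreconnected C) (hAC : Disjoint A (interior C))
    (hF : IsCompact F) (hCF : frontier C ⊆ F) {a x : X} (ha : a ∈ A ∩ closure C)
    (hx : x ∈ A ∩ closure C) : a ∈ connectedComponentIn F x := by
  have hfr : ∀ z ∈ A ∩ closure C, z ∈ F := fun z hz =>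
    hCF ⟨hz.2, fun hi => hAC.ne_of_mem hz.1 hi rfl⟩
  by_contra hax
  obtain ⟨f, hf, hf01, hfx, hfa⟩ :=
    exists_continuous_zero_one_of_notMem_connectedComponentIn hF (hfr a ha) (hfr x hx) hax
  have hfC : ∀ z ∈ frontier C, ∃ m : ℤ, f z = m := by
    intro z hz
    rcases hf01 z (hCF hz) with h | h
    exacts [⟨0, by simp [h]⟩, ⟨1, by simp [h]⟩]
  have := apply_eq_of_mem_inter_closure_of_int_on_frontier hA hC hAC hf hfC ha hx
  rw [hfa, hfx] at this
  exact one_ne_zero this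

end Topology

section Metric

variable {α : Type*} [PseudoMetricSpace α]

theorem Metric.nonempty_of_diam_pos {s : Set α} (h : 0 < diam s) : s.Nonempty :=
  nonempty_iff_ne_empty.2 fun hs => by simp [hs] at h

theorem IsCompact.exists_dist_eq_diam {s : Set α} (hs : IsCompact s) (hne : s.Nonempty) :
    ∃ a ∈ s, ∃ b ∈ s, dist a b = diam s := by
  obtain ⟨⟨a, b⟩, ⟨ha, hb⟩, hmax⟩ := (hs.prod hs).exists_isMaxOn (hne.prod hne)
    (continuous_dist.continuousOn : ContinuousOn (fun p : α × α => dist p.1 p.2) _)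
  refine ⟨a, ha, b, hb, le_antisymm (dist_le_diam_of_mem hs.isBounded ha hb) ?_⟩
  exact diam_le_of_forall_dist_le dist_nonneg fun p hp q hq => hmax (mk_mem_prod hp hq)

end Metric

theorem Metric.diam_pos_of_isOpen {α : Type*} [MetricSpace α] [∀ x : α, (𝓝[≠] x).NeBot]
    {s : Set α} (hs : IsOpen s) (hne : s.Nonempty) (hb : IsBounded s) : 0 < diam s := by
  obtain ⟨x, hx⟩ := hne
  exact diam_pos (infinite_of_mem_nhds x (hs.mem_nhds hx)).nontrivial hb

section NormedSpace

variable {E : Type*} [NormedAddCommGroup E] [NormedSpace ℝ E]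

theorem dist_add_smul_sub_left (a b : E) {t : ℝ} (ht : -1 ≤ t) :
    dist (a + t • (a - b)) b = (1 + t) * dist a b := by
  rw [dist_eq_norm, dist_eq_norm, show a + t • (a - b) - b = (1 + t) • (a - b) by module,
    norm_smul, Real.norm_of_nonneg (by linarith)]

section Diametral

variable {K : Set E} (hK : IsBounded K) {a b : E} (hb : b ∈ K) (hab : dist a b = diam K)
  (hpos : 0 < diam K)
include hK hb hab hpos

theorem add_smul_sub_notMem_of_dist_eq_diam {t : ℝ} (ht : 0 < t) : a + t • (a - b) ∉ K := by
  intro h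
  have := dist_le_diam_of_mem hK h hb
  rw [dist_add_smul_sub_left a b (by linarith), hab] at this
  nlinarith

theorem diam_lt_dist_add_two_smul_sub {c : E} (hc : c ∈ K) :
    diam K < dist (a + (2 : ℝ) • (a - b)) c := by
  have h₁ := dist_add_smul_sub_left a b (t := 2) (by norm_num)
  have h₂ := dist_triangle (a + (2 : ℝ) • (a - b)) c b
  have h₃ := dist_le_diam_of_mem hK hc hb
  rw [h₁, hab] at h₂
  linarith

end Diametral

theorem isPreconnected_compl_closedBall (h : 1 < Module.rank ℝ E) (c : E) {r : ℝ} (hr : 0 ≤ r) :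
    IsPreconnected (closedBall c r)ᶜ := by
  have hP := ((isPreconnected_sphere h 0 1).prod (isPreconnected_Ioi (a := r))).image
    (fun p : E × ℝ => c + p.2 • p.1) (by fun_prop)
  convert hP using 1
  ext y
  simp only [mem_compl_iff, mem_closedBall, not_le, mem_image, Prod.exists, mem_prod,
    mem_sphere_zero_iff_norm, mem_Ioi]
  constructor
  · intro hy
    have hyc : 0 < ‖y - c‖ := by rw [← dist_eq_norm]; linarith
    refine ⟨‖y - c‖⁻¹ • (y - c), ‖y - c‖, ⟨?_, by rwa [← dist_eq_norm]⟩, ?_⟩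
    · rw [norm_smul, norm_inv, norm_norm, inv_mul_cancel₀ hyc.ne']
    · rw [smul_smul, mul_inv_cancel₀ hyc.ne', one_smul, add_sub_cancel]
  · rintro ⟨u, s, ⟨hu, hs⟩, rfl⟩
    rwa [dist_eq_norm, add_sub_cancel_left, norm_smul, hu, mul_one,
      Real.norm_of_nonneg (by linarith)]

theorem mem_closure_connectedComponentIn_compl_of_dist_eq_diam (h : 1 < Module.rank ℝ E)
    {K : Set E} (hK : IsBounded K) {a b c z : E} (hb : b ∈ K) (hc : c ∈ K)
    (hab : dist a b = diam K) (hpos : 0 < diam K) (hz : diam K < dist z c) :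
    a ∈ closure (connectedComponentIn Kᶜ z) := by
  set ray := (fun t : ℝ => a + t • (a - b)) '' Ioi 0
  have hrayK : ray ⊆ Kᶜ := by
    rintro _ ⟨t, ht, rfl⟩
    exact add_smul_sub_notMem_of_dist_eq_diam hK hb hab hpos ht
  have hfarK : (closedBall c (diam K))ᶜ ⊆ Kᶜ := fun y hy hyK =>
    hy (mem_closedBall.2 (dist_le_diam_of_mem hK hyK hc))
  have hfar_ray : a + (2 : ℝ) • (a - b) ∈ (closedBall c (diam K))ᶜ ∩ ray :=
    ⟨fun hy => (mem_closedBall.1 hy).not_gt (diam_lt_dist_add_two_smul_sub hK hb hab hpos hc),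
      2, by norm_num, rfl⟩
  have hconn : IsPreconnected ((closedBall c (diam K))ᶜ ∪ ray) :=
    (isPreconnected_compl_closedBall h c hpos.le).union' ⟨_, hfar_ray⟩
      (isPreconnected_Ioi.image _ (by fun_prop))
  have hsub := hconn.subset_connectedComponentIn (Or.inl (mem_compl (by simpa using hz)))
    (union_subset hfarK hrayK)
  have ha : a ∈ closure ray := by
    have := (Continuous.continuousWithinAt (f := fun t : ℝ => a + t • (a - b)) (x := 0)
      (s := Ioi 0) (by fun_prop)).mem_closure_image (by simp)
    simpa using this
  exact closure_mono (subset_union_right.trans hsub) ha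

theorem mem_connectedComponentIn_frontier_of_dist_eq_diam (h : 1 < Module.rank ℝ E)
    {K : Set E} (hK : IsCompact K) (hKc : IsPreconnected K) (hpos : 0 < diam K) {a b x y : E}
    (ha : a ∈ K) (hb : b ∈ K) (hx : x ∈ K) (hy : y ∈ K) (hab : dist a b = diam K)
    (hxy : dist x y = diam K) : a ∈ connectedComponentIn (frontier K) x := by
  have hz := diam_lt_dist_add_two_smul_sub hK.isBounded hy hxy hpos hx
  refine mem_connectedComponentIn_of_frontier_subset hKc isPreconnected_connectedComponentIn
    (disjoint_compl_right.mono_right (interior_subset.trans (connectedComponentIn_subset _ _)))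
    (hK.of_isClosed_subset isClosed_frontier hK.isClosed.frontier_subset)
    ((frontier_connectedComponentIn_subset hK.isClosed.isOpen_compl _).trans_eq
      (frontier_compl K))
    ⟨ha, mem_closure_connectedComponentIn_compl_of_dist_eq_diam h hK.isBounded hb hx hab hpos hz⟩
    ⟨hx, mem_closure_connectedComponentIn_compl_of_dist_eq_diam h hK.isBounded hy hx hxy hpos hz⟩

end NormedSpace

theorem Real.subsingleton_of_isPreconnected_subset_frontier {s U : Set ℝ}
    (hs : IsPreconnected s) (hU : IsOpen U) (hsU : s ⊆ frontier U) : s.Subsingleton := by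
  intro x hx y hy
  by_contra hne
  wlog hxy : x < y generalizing x y
  · exact this hy hx (Ne.symm hne) (lt_of_le_of_ne (not_lt.1 hxy) (Ne.symm hne))
  have hIoo : Ioo x y ⊆ interior (frontier U) :=
    interior_maximal (Ioo_subset_Icc_self.trans ((hs.Icc_subset hx hy).trans hsU)) isOpen_Ioo
  rw [← frontier_compl, interior_frontier hU.isClosed_compl] at hIoo
  exact (nonempty_Ioo.2 hxy).ne_empty (subset_empty_iff.1 hIoo)

theorem EuclideanSpace.subsingleton_of_isPreconnected_subset_frontier {d : ℕ} (hd : d ≤ 1)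
    {s U : Set (EuclideanSpace ℝ (Fin d))} (hs : IsPreconnected s) (hU : IsOpen U)
    (hsU : s ⊆ frontier U) : s.Subsingleton := by
  interval_cases d
  · exact subsingleton_of_subsingleton
  · let e : EuclideanSpace ℝ (Fin 1) ≃ₜ ℝ := ((EuclideanSpace.equiv (Fin 1) ℝ).trans
      (ContinuousLinearEquiv.funUnique (Fin 1) ℝ ℝ)).toHomeomorph
    have hes := Real.subsingleton_of_isPreconnected_subset_frontier
      (hs.image e e.continuous.continuousOn) (e.isOpenMap U hU)
      (by rw [← e.image_frontier]; exact image_mono hsU)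
    exact (e.injective.subsingleton_image_iff).1 hes

section Diameter

variable {E : Type*} [NormedAddCommGroup E] [NormedSpace ℝ E] [ProperSpace E]
  (hE : 1 < Module.rank ℝ E) {Ω : Set E} (hΩc : IsPreconnected Ω) (hΩb : IsBounded Ω)
  (hpos : 0 < diam Ω) {x₀ : E} (hΓdiam : diam (connectedComponentIn (frontier Ω) x₀) = diam Ω)
include hE hΩc hΩb hpos hΓdiam

theorem inter_closure_nonempty_of_diam_le {ω : Set E} (hω : closure ω ⊆ closure Ω)
    (hdiam : diam Ω ≤ diam ω) : (connectedComponentIn (frontier Ω) x₀ ∩ closure ω).Nonempty := by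
  set Γ := connectedComponentIn (frontier Ω) x₀
  set K := closure Ω
  have hK : IsCompact K := hΩb.isCompact_closure
  have hKdiam : diam K = diam Ω := diam_closure Ω
  have hΓK : Γ ⊆ K := (connectedComponentIn_subset _ _).trans frontier_subset_closure
  have hΓne : Γ.Nonempty := nonempty_of_diam_pos (hΓdiam ▸ hpos)
  obtain ⟨x, hx, y, hy, hxy⟩ := (hK.of_isClosed_subset
    (isClosed_frontier.connectedComponentIn x₀) hΓK).exists_dist_eq_diam hΓne
  have hωdiam : diam (closure ω) = diam Ω :=
    le_antisymm (hKdiam ▸ diam_mono hω hK.isBounded) (by rwa [diam_closure])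
  have hωne : (closure ω).Nonempty := nonempty_of_diam_pos (hωdiam ▸ hpos)
  obtain ⟨a, ha, b, hb, hab⟩ :=
    (hK.of_isClosed_subset isClosed_closure hω).exists_dist_eq_diam hωne
  have haΓ : a ∈ Γ := by
    have := mem_connectedComponentIn_frontier_of_dist_eq_diam hE hK hΩc.closure
      (hKdiam ▸ hpos) (hω ha) (hω hb) (hΓK hx) (hΓK hy) (by rw [hab, hωdiam, hKdiam])
      (by rw [hxy, hΓdiam, hKdiam])
    rw [show Γ = connectedComponentIn (frontier Ω) x from connectedComponentIn_eq hx]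
    exact connectedComponentIn_mono x frontier_closure_subset this
  exact ⟨a, haΓ, ha⟩

theorem inter_closure_nonempty_of_closure_eq_union {ω ω' : Set E}
    (hclos : closure Ω = closure ω ∪ closure ω') (hdiam : diam ω = diam ω') :
    (connectedComponentIn (frontier Ω) x₀ ∩ closure ω).Nonempty := by
  set Γ := connectedComponentIn (frontier Ω) x₀
  by_contra hempty
  rw [not_nonempty_iff_eq_empty] at hempty
  have hΓω' : Γ ⊆ closure ω' := fun z hz =>
    (hclos ▸ frontier_subset_closure (connectedComponentIn_subset _ _ hz) :
      z ∈ closure ω ∪ closure ω').resolve_left fun hzω => hempty.subset ⟨hz, hzω⟩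
  refine (inter_closure_nonempty_of_diam_le hE hΩc hΩb hpos hΓdiam (hclos ▸ subset_union_left)
    ?_).ne_empty hempty
  calc diam Ω = diam Γ := hΓdiam.symm
    _ ≤ diam (closure ω') := diam_mono hΓω' (hΩb.closure.subset (hclos ▸ subset_union_right))
    _ = diam ω := by rw [diam_closure, hdiam]

end Diameter

theorem stmt_13_general {d : ℕ} (Ω ω₁ ω₂ Γ : Set (EuclideanSpace ℝ (Fin d)))
    (hΩo : IsOpen Ω) (hΩc : IsConnected Ω) (hΩb : Bornology.IsBounded Ω)
    (h1o : IsOpen ω₁) (h2o : IsOpen ω₂)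
    (hdisj : Disjoint ω₁ ω₂)
    (hiso : ∃ e : EuclideanSpace ℝ (Fin d) ≃ᵢ EuclideanSpace ℝ (Fin d),
      e '' ω₁ = ω₂)
    (hclos : closure Ω = closure ω₁ ∪ closure ω₂)
    (hΓ : ∃ z ∈ frontier Ω, Γ = connectedComponentIn (frontier Ω) z)
    (hdiam : Metric.diam Γ = Metric.diam Ω) :
    (Γ ∩ frontier ω₁).Nonempty ∧ (Γ ∩ frontier ω₂).Nonempty ∧
      (frontier ω₁ ∩ frontier ω₂ ∩ Γ).Nonempty := by
  obtain ⟨x₀, hx₀, rfl⟩ := hΓ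
  have : Nontrivial (EuclideanSpace ℝ (Fin d)) :=
    nontrivial_of_nonempty_of_frontier_nonempty hΩc.nonempty ⟨x₀, hx₀⟩
  have hpos : 0 < diam Ω := diam_pos_of_isOpen hΩo hΩc.nonempty hΩb
  have hΓc : IsPreconnected (connectedComponentIn (frontier Ω) x₀) :=
    isPreconnected_connectedComponentIn
  have hd : 1 < Module.rank ℝ (EuclideanSpace ℝ (Fin d)) := by
    by_contra! hd
    rw [← Module.finrank_eq_rank, finrank_euclideanSpace_fin] at hd
    have := diam_subsingleton (EuclideanSpace.subsingleton_of_isPreconnected_subset_frontier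
      (by exact_mod_cast hd) hΓc hΩo (connectedComponentIn_subset _ _))
    exact hpos.ne' (hdiam ▸ this)
  obtain ⟨e, he⟩ := hiso
  have hdiam₁₂ : diam ω₁ = diam ω₂ := by rw [← he, e.isometry.diam_image]
  have h₁ := inter_closure_nonempty_of_closure_eq_union hd hΩc.isPreconnected hΩb hpos hdiam
    hclos hdiam₁₂
  have h₂ := inter_closure_nonempty_of_closure_eq_union hd hΩc.isPreconnected hΩb hpos hdiam
    (hclos.trans (union_comm _ _)) hdiam₁₂.symm
  obtain ⟨z, hz, hzΓ⟩ := hΓc.frontier_inter_frontier_inter_nonempty h1o h2o hdisj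
    (fun z hz => hclos ▸ frontier_subset_closure (connectedComponentIn_subset _ _ hz)) h₁ h₂
  exact ⟨⟨z, hzΓ, hz.1⟩, ⟨z, hzΓ, hz.2⟩, ⟨z, hz, hzΓ⟩⟩

/-- If ω₁, ω₂ are disjoint bounded open subsets of ℝ^d isometric to each other,
Ω is a bounded connected open set with closure Ω = closure ω₁ ∪ closure ω₂,
and Γ is a connected component of ∂Ω with diam Γ = diam Ω, then Γ meets both
∂ω₁ and ∂ω₂, and there is a point z ∈ ∂ω₁ ∩ ∂ω₂ ∩ Γ. -/
theorem stmt_13 {d : ℕ} (Ω ω₁ ω₂ Γ : Set (EuclideanSpace ℝ (Fin d)))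
    (hΩo : IsOpen Ω) (hΩc : IsConnected Ω) (hΩb : Bornology.IsBounded Ω)
    (h1o : IsOpen ω₁) (h2o : IsOpen ω₂)
    (h1b : Bornology.IsBounded ω₁) (h2b : Bornology.IsBounded ω₂)
    (hdisj : Disjoint ω₁ ω₂)
    (hiso : ∃ e : EuclideanSpace ℝ (Fin d) ≃ᵢ EuclideanSpace ℝ (Fin d),
      e '' ω₁ = ω₂)
    (hclos : closure Ω = closure ω₁ ∪ closure ω₂)
    (hΓ : ∃ z ∈ frontier Ω, Γ = connectedComponentIn (frontier Ω) z)
    (hdiam : Metric.diam Γ = Metric.diam Ω) :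
    (Γ ∩ frontier ω₁).Nonempty ∧ (Γ ∩ frontier ω₂).Nonempty ∧
      (frontier ω₁ ∩ frontier ω₂ ∩ Γ).Nonempty :=
  stmt_13_general Ω ω₁ ω₂ Γ hΩo hΩc hΩb h1o h2o hdisj hiso hclos hΓ hdiam
end

section
/- Let H₁ = L²(Ω₁), H₂ = L²(Ω₂) for bounded connected open sets Ω_j ⊆ ℝ^d, let A_j be self-adjoint, bounded below, with compact resolvent on H_j, generating positive irreducible semigroups S_j(t) = e^{-tA_j}, and let ψ_j ≫ 0 be the normalized principal eigenfunction for the principal eigenvalue λ₁(A_j). Assume λ₁(A₁) = λ₁(A₂) =: λ₁. If 0 ≠ U : H₁ → H₂ is a bounded disjointness-preserving operator with U S₁(t) = S₂(t) U for all t ≥ 0, then Uψ₁ is a nonzero eigenfunction of A₂ for the eigenvalue λ₁; moreover the modulus operator |U| also intertwines: |U| S₁(t) = S₂(t) |U| for all t ≥ 0. -/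
open MeasureTheory
open scoped RealInnerProductSpace

/-! The eigenvalue equation for `U ψ₁` is the intertwining relation applied to `ψ₁`. Everything
else rests on one fact: a positive operator on `L²` that kills an a.e. strictly positive function
is zero, because its adjoint is positive and orthogonal to that function. Applied to the modulus
`|U|` this gives `U ψ₁ ≠ 0`. Since `S₂ (U ψ₁) = e • U ψ₁` with `e > 0` and `|S₂ u| ≤ S₂ |u|`,
we get `e • |U ψ₁| ≤ S₂ |U ψ₁|`; pairing with the strictly positive eigenfunction `ψ₂` of the
self-adjoint `S₂` turns this into an equality. Finally the defect `S₂ |U| - |U| S₁` is positive,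
since `|U S₁ f| = |S₂ U f| ≤ S₂ |U f|`, and it kills `ψ₁`, so it vanishes. -/

section LatticeOrderedGroup

variable {M N F : Type*} [AddCommGroup M] [Lattice M] [IsOrderedAddMonoid M] [AddCommGroup N]
  [FunLike F M N] [AddMonoidHomClass F M N]

lemma map_eq_zero_of_forall_nonneg (T : F) (hT : ∀ f, 0 ≤ f → T f = 0) (f : M) : T f = 0 := by
  rw [← posPart_sub_negPart f, map_sub, hT _ (posPart_nonneg f), hT _ (negPart_nonneg f),
    sub_zero]

lemma abs_map_le_map_abs [Lattice N] [IsOrderedAddMonoid N] (T : F) (hT : ∀ f, 0 ≤ f → 0 ≤ T f)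
    (f : M) : |T f| ≤ T |f| := by
  have hsub := hT _ (sub_nonneg.2 (le_abs_self f))
  have hadd := hT _ (neg_le_iff_add_nonneg.1 (neg_le_abs f))
  rw [map_sub] at hsub
  rw [map_add] at hadd
  exact abs_le'.2 ⟨sub_nonneg.1 hsub, neg_le_iff_add_nonneg.2 hadd⟩

end LatticeOrderedGroup

namespace MeasureTheory.Lp

variable {α β : Type*} [MeasurableSpace α] [MeasurableSpace β] {μ : Measure α} {ν : Measure β}

lemma real_inner_eq_integral (f g : Lp ℝ 2 μ) : ⟪f, g⟫ = ∫ x, f x * g x ∂μ := by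
  simp only [L2.inner_def, Real.inner_apply]

lemma real_inner_nonneg {f g : Lp ℝ 2 μ} (hf : 0 ≤ f) (hg : 0 ≤ g) : 0 ≤ ⟪f, g⟫ := by
  rw [real_inner_eq_integral]
  refine integral_nonneg_of_ae ?_
  filter_upwards [(Lp.coeFn_nonneg f).2 hf, (Lp.coeFn_nonneg g).2 hg] with x hfx hgx
  exact mul_nonneg hfx hgx

lemma eq_zero_of_real_inner_eq_zero {v w : Lp ℝ 2 μ} (hv : 0 ≤ v) (hw : ∀ᵐ x ∂μ, 0 < w x)
    (h : ⟪v, w⟫ = 0) : v = 0 := by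
  have hvw_nonneg : 0 ≤ᵐ[μ] fun x => v x * w x := by
    filter_upwards [(Lp.coeFn_nonneg v).2 hv, hw] with x hvx hwx
    exact mul_nonneg hvx hwx.le
  have hvw_zero : (fun x => v x * w x) =ᵐ[μ] 0 := by
    rw [real_inner_eq_integral] at h
    rwa [← integral_eq_zero_iff_of_nonneg_ae hvw_nonneg]
    simpa only [Real.inner_apply] using L2.integrable_inner (𝕜 := ℝ) v w
  refine Lp.ext ?_
  filter_upwards [hvw_zero, hw, Lp.coeFn_zero ℝ 2 μ] with x hvwx hwx h0
  rw [h0]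
  exact (mul_eq_zero.1 hvwx).resolve_right hwx.ne'

lemma nonneg_of_forall_real_inner_nonneg {g : Lp ℝ 2 μ} (h : ∀ f, 0 ≤ f → 0 ≤ ⟪f, g⟫) :
    0 ≤ g := by
  -- pointwise `g⁻ * g = -(g⁻)²`
  have hinner : ⟪g⁻, g⟫ = -⟪g⁻, g⁻⟫ := by
    rw [real_inner_eq_integral, real_inner_eq_integral, ← integral_neg]
    refine integral_congr_ae ?_
    filter_upwards [Lp.coeFn_sup (-g) 0, Lp.coeFn_neg g, Lp.coeFn_zero ℝ 2 μ] with x hsup hneg h0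
    rw [negPart_def, hsup, Pi.sup_apply, hneg, h0, Pi.neg_apply, Pi.zero_apply]
    rcases le_total (g x) 0 with hgx | hgx
    · rw [sup_eq_left.2 (neg_nonneg.2 hgx)]; ring
    · rw [sup_eq_right.2 (neg_nonpos.2 hgx)]; ring
  have hnorm : ‖g⁻‖ ^ 2 ≤ 0 := by
    have := h _ (negPart_nonneg g)
    rw [hinner, real_inner_self_eq_norm_sq] at this
    linarith
  exact negPart_eq_zero.1 (norm_eq_zero.1 (pow_eq_zero_iff two_ne_zero |>.1
    (le_antisymm hnorm (sq_nonneg _))))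

lemma abs_smul_of_nonneg {c : ℝ} (hc : 0 ≤ c) (f : Lp ℝ 2 μ) : |c • f| = c • |f| := by
  refine Lp.ext ?_
  filter_upwards [Lp.coeFn_abs (c • f), Lp.coeFn_smul c f, Lp.coeFn_smul c |f|,
    Lp.coeFn_abs f] with x h1 h2 h3 h4
  rw [h1, h2, h3, Pi.smul_apply, Pi.smul_apply, h4, smul_eq_mul, smul_eq_mul, abs_mul,
    abs_of_nonneg hc]

lemma nonneg_of_ae_pos {ψ : Lp ℝ 2 μ} (hψ : ∀ᵐ x ∂μ, 0 < ψ x) : 0 ≤ ψ :=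
  (Lp.coeFn_nonneg ψ).1 (hψ.mono fun _ hx => hx.le)

lemma adjoint_nonneg {T : Lp ℝ 2 μ →L[ℝ] Lp ℝ 2 ν} (hT : ∀ f, 0 ≤ f → 0 ≤ T f) {g : Lp ℝ 2 ν}
    (hg : 0 ≤ g) : 0 ≤ T.adjoint g :=
  nonneg_of_forall_real_inner_nonneg fun f hf => by
    rw [ContinuousLinearMap.adjoint_inner_right]
    exact real_inner_nonneg (hT f hf) hg

lemma eq_zero_of_apply_eq_zero {T : Lp ℝ 2 μ →L[ℝ] Lp ℝ 2 ν} (hT : ∀ f, 0 ≤ f → 0 ≤ T f)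
    {ψ : Lp ℝ 2 μ} (hψ : ∀ᵐ x ∂μ, 0 < ψ x) (hTψ : T ψ = 0) : T = 0 := by
  have hadj : T.adjoint = 0 := ContinuousLinearMap.ext <|
    map_eq_zero_of_forall_nonneg T.adjoint fun g hg =>
      eq_zero_of_real_inner_eq_zero (adjoint_nonneg hT hg) hψ <| by
        rw [real_inner_comm, ContinuousLinearMap.adjoint_inner_right, hTψ, inner_zero_left]
  rw [← T.adjoint_adjoint, hadj, map_zero]

lemma apply_eq_smul_of_smul_le_apply {S : Lp ℝ 2 μ →L[ℝ] Lp ℝ 2 μ} (hS : IsSelfAdjoint S)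
    {ψ : Lp ℝ 2 μ} (hψ : ∀ᵐ x ∂μ, 0 < ψ x) {c : ℝ} (hSψ : S ψ = c • ψ) {u : Lp ℝ 2 μ}
    (hu : c • u ≤ S u) : S u = c • u := by
  have hinner : ⟪S u - c • u, ψ⟫ = 0 := by
    rw [inner_sub_left, ← ContinuousLinearMap.adjoint_inner_right, hS.adjoint_eq, hSψ,
      real_inner_smul_left, real_inner_smul_right, sub_self]
  exact sub_eq_zero.1 (eq_zero_of_real_inner_eq_zero (sub_nonneg.2 hu) hψ hinner)

lemma apply_abs_eq_smul_abs {S : Lp ℝ 2 μ →L[ℝ] Lp ℝ 2 μ} (hS : IsSelfAdjoint S)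
    (hSpos : ∀ f, 0 ≤ f → 0 ≤ S f) {ψ : Lp ℝ 2 μ} (hψ : ∀ᵐ x ∂μ, 0 < ψ x) {c : ℝ} (hc : 0 ≤ c)
    (hSψ : S ψ = c • ψ) {u : Lp ℝ 2 μ} (hSu : S u = c • u) : S |u| = c • |u| :=
  apply_eq_smul_of_smul_le_apply hS hψ hSψ <| by
    rw [← abs_smul_of_nonneg hc, ← hSu]
    exact abs_map_le_map_abs S hSpos u

lemma apply_ne_zero_of_modulus {U M : Lp ℝ 2 μ →L[ℝ] Lp ℝ 2 ν} (hU : U ≠ 0)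
    (hM : ∀ f, 0 ≤ f → M f = |U f|) {ψ : Lp ℝ 2 μ} (hψ : ∀ᵐ x ∂μ, 0 < ψ x) : U ψ ≠ 0 := by
  intro hUψ
  have hM0 : M = 0 :=
    eq_zero_of_apply_eq_zero (fun f hf => hM f hf ▸ abs_nonneg _) hψ
      (by rw [hM ψ (nonneg_of_ae_pos hψ), hUψ, abs_zero])
  refine hU (ContinuousLinearMap.ext <| map_eq_zero_of_forall_nonneg U fun f hf => ?_)
  have hUf : |U f| = 0 := by rw [← hM f hf, hM0, zero_apply]
  have hUf_le := abs_le'.1 hUf.le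
  exact le_antisymm hUf_le.1 (neg_nonpos.1 hUf_le.2)

lemma modulus_comp_eq_comp_modulus {S₁ : Lp ℝ 2 μ →L[ℝ] Lp ℝ 2 μ}
    {S₂ : Lp ℝ 2 ν →L[ℝ] Lp ℝ 2 ν} {U M : Lp ℝ 2 μ →L[ℝ] Lp ℝ 2 ν}
    (hS₁ : ∀ f, 0 ≤ f → 0 ≤ S₁ f) (hS₂ : ∀ f, 0 ≤ f → 0 ≤ S₂ f) (hU : S₂.comp U = U.comp S₁)
    (hM : ∀ f, 0 ≤ f → M f = |U f|) {ψ : Lp ℝ 2 μ} (hψ : ∀ᵐ x ∂μ, 0 < ψ x) {c : ℝ}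
    (hS₁ψ : S₁ ψ = c • ψ) (hS₂Uψ : S₂ |U ψ| = c • |U ψ|) : M.comp S₁ = S₂.comp M := by
  have hUS : ∀ f, U (S₁ f) = S₂ (U f) := fun f => (DFunLike.congr_fun hU f).symm
  have hdefect_nonneg : ∀ f, 0 ≤ f → 0 ≤ (S₂.comp M - M.comp S₁) f := fun f hf => by
    simp only [sub_apply, ContinuousLinearMap.comp_apply]
    rw [hM f hf, hM _ (hS₁ f hf), hUS, sub_nonneg]
    exact abs_map_le_map_abs S₂ hS₂ (U f)
  have hdefect_ψ : (S₂.comp M - M.comp S₁) ψ = 0 := by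
    simp only [sub_apply, ContinuousLinearMap.comp_apply]
    rw [hS₁ψ, map_smul, hM ψ (nonneg_of_ae_pos hψ), hS₂Uψ, sub_self]
  exact (sub_eq_zero.1 (eq_zero_of_apply_eq_zero hdefect_nonneg hψ hdefect_ψ)).symm

end MeasureTheory.Lp

theorem stmt_16_general {d : ℕ} (Ω₁ Ω₂ : Set (EuclideanSpace ℝ (Fin d)))
    (S₁ : ℝ → Lp ℝ 2 (volume.restrict Ω₁) →L[ℝ] Lp ℝ 2 (volume.restrict Ω₁))
    (S₂ : ℝ → Lp ℝ 2 (volume.restrict Ω₂) →L[ℝ] Lp ℝ 2 (volume.restrict Ω₂))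
    (hS₂sa : ∀ t ≥ (0:ℝ), IsSelfAdjoint (S₂ t))
    (hS₁pos : ∀ t ≥ (0:ℝ), ∀ f, 0 ≤ f → 0 ≤ S₁ t f)
    (hS₂pos : ∀ t ≥ (0:ℝ), ∀ f, 0 ≤ f → 0 ≤ S₂ t f)
    (lam₁ : ℝ)
    (ψ₁ : Lp ℝ 2 (volume.restrict Ω₁)) (ψ₂ : Lp ℝ 2 (volume.restrict Ω₂))
    (hψ₁pos : ∀ᵐ x ∂(volume.restrict Ω₁), 0 < ψ₁ x)
    (hψ₂pos : ∀ᵐ x ∂(volume.restrict Ω₂), 0 < ψ₂ x)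
    (hψ₁eig : ∀ t ≥ (0:ℝ), S₁ t ψ₁ = Real.exp (-(lam₁ * t)) • ψ₁)
    (hψ₂eig : ∀ t ≥ (0:ℝ), S₂ t ψ₂ = Real.exp (-(lam₁ * t)) • ψ₂)
    (U : Lp ℝ 2 (volume.restrict Ω₁) →L[ℝ] Lp ℝ 2 (volume.restrict Ω₂))
    (hU0 : U ≠ 0)
    (hUint : ∀ t ≥ (0:ℝ), (S₂ t).comp U = U.comp (S₁ t))
    (absU : Lp ℝ 2 (volume.restrict Ω₁) →L[ℝ] Lp ℝ 2 (volume.restrict Ω₂))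
    (habsU : ∀ f, 0 ≤ f → absU f = |U f|) :
    (U ψ₁ ≠ 0 ∧
      ∀ t ≥ (0:ℝ), S₂ t (U ψ₁) = Real.exp (-(lam₁ * t)) • U ψ₁) ∧
    ∀ t ≥ (0:ℝ), absU.comp (S₁ t) = (S₂ t).comp absU := by
  have heig : ∀ t ≥ (0:ℝ), S₂ t (U ψ₁) = Real.exp (-(lam₁ * t)) • U ψ₁ := fun t ht => by
    rw [← ContinuousLinearMap.comp_apply, hUint t ht, ContinuousLinearMap.comp_apply,
      hψ₁eig t ht, map_smul]
  refine ⟨⟨Lp.apply_ne_zero_of_modulus hU0 habsU hψ₁pos, heig⟩, fun t ht => ?_⟩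
  have habs_eig : S₂ t |U ψ₁| = Real.exp (-(lam₁ * t)) • |U ψ₁| :=
    Lp.apply_abs_eq_smul_abs (hS₂sa t ht) (hS₂pos t ht) hψ₂pos (Real.exp_pos _).le
      (hψ₂eig t ht) (heig t ht)
  exact Lp.modulus_comp_eq_comp_modulus (hS₁pos t ht) (hS₂pos t ht) (hUint t ht) habsU hψ₁pos
    (hψ₁eig t ht) habs_eig

/-- Abstract L² result: if S₁, S₂ are positive irreducible self-adjoint
semigroups on L²(Ω₁), L²(Ω₂) with common principal eigenvalue λ₁ and a.e.
positive normalized principal eigenfunctions ψ₁, ψ₂, and 0 ≠ U is a bounded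
disjointness-preserving operator intertwining S₁ and S₂, then Uψ₁ is a nonzero
eigenfunction of the generator of S₂ for λ₁ (i.e. S₂(t)Uψ₁ = e^{-λ₁t}Uψ₁),
and the modulus operator |U| also intertwines the semigroups. -/
theorem stmt_16 {d : ℕ} (Ω₁ Ω₂ : Set (EuclideanSpace ℝ (Fin d)))
    (h₁o : IsOpen Ω₁) (h₂o : IsOpen Ω₂)
    (h₁c : IsConnected Ω₁) (h₂c : IsConnected Ω₂)
    (h₁b : Bornology.IsBounded Ω₁) (h₂b : Bornology.IsBounded Ω₂)
    (S₁ : ℝ → Lp ℝ 2 (volume.restrict Ω₁) →L[ℝ] Lp ℝ 2 (volume.restrict Ω₁))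
    (S₂ : ℝ → Lp ℝ 2 (volume.restrict Ω₂) →L[ℝ] Lp ℝ 2 (volume.restrict Ω₂))
    (hS₁0 : S₁ 0 = ContinuousLinearMap.id ℝ _)
    (hS₂0 : S₂ 0 = ContinuousLinearMap.id ℝ _)
    (hS₁sg : ∀ s ≥ (0:ℝ), ∀ t ≥ (0:ℝ), S₁ (s + t) = (S₁ s).comp (S₁ t))
    (hS₂sg : ∀ s ≥ (0:ℝ), ∀ t ≥ (0:ℝ), S₂ (s + t) = (S₂ s).comp (S₂ t))
    (hS₁sa : ∀ t ≥ (0:ℝ), IsSelfAdjoint (S₁ t))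
    (hS₂sa : ∀ t ≥ (0:ℝ), IsSelfAdjoint (S₂ t))
    (hS₁pos : ∀ t ≥ (0:ℝ), ∀ f, 0 ≤ f → 0 ≤ S₁ t f)
    (hS₂pos : ∀ t ≥ (0:ℝ), ∀ f, 0 ≤ f → 0 ≤ S₂ t f)
    (hS₁irr : ∀ V : Set (EuclideanSpace ℝ (Fin d)), MeasurableSet V →
      (∀ t ≥ (0:ℝ), ∀ f : Lp ℝ 2 (volume.restrict Ω₁),
        (∀ᵐ x ∂(volume.restrict Ω₁), x ∈ V → f x = 0) →
        (∀ᵐ x ∂(volume.restrict Ω₁), x ∈ V → S₁ t f x = 0)) →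
      volume.restrict Ω₁ V = 0 ∨ volume.restrict Ω₁ Vᶜ = 0)
    (hS₂irr : ∀ V : Set (EuclideanSpace ℝ (Fin d)), MeasurableSet V →
      (∀ t ≥ (0:ℝ), ∀ f : Lp ℝ 2 (volume.restrict Ω₂),
        (∀ᵐ x ∂(volume.restrict Ω₂), x ∈ V → f x = 0) →
        (∀ᵐ x ∂(volume.restrict Ω₂), x ∈ V → S₂ t f x = 0)) →
      volume.restrict Ω₂ V = 0 ∨ volume.restrict Ω₂ Vᶜ = 0)
    (lam₁ : ℝ)
    (ψ₁ : Lp ℝ 2 (volume.restrict Ω₁)) (ψ₂ : Lp ℝ 2 (volume.restrict Ω₂))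
    (hψ₁pos : ∀ᵐ x ∂(volume.restrict Ω₁), 0 < ψ₁ x)
    (hψ₂pos : ∀ᵐ x ∂(volume.restrict Ω₂), 0 < ψ₂ x)
    (hψ₁n : ‖ψ₁‖ = 1) (hψ₂n : ‖ψ₂‖ = 1)
    (hψ₁eig : ∀ t ≥ (0:ℝ), S₁ t ψ₁ = Real.exp (-(lam₁ * t)) • ψ₁)
    (hψ₂eig : ∀ t ≥ (0:ℝ), S₂ t ψ₂ = Real.exp (-(lam₁ * t)) • ψ₂)
    (U : Lp ℝ 2 (volume.restrict Ω₁) →L[ℝ] Lp ℝ 2 (volume.restrict Ω₂))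
    (hU0 : U ≠ 0)
    (hUdisj : ∀ f g : Lp ℝ 2 (volume.restrict Ω₁),
      |f| ⊓ |g| = 0 → |U f| ⊓ |U g| = 0)
    (hUint : ∀ t ≥ (0:ℝ), (S₂ t).comp U = U.comp (S₁ t))
    (absU : Lp ℝ 2 (volume.restrict Ω₁) →L[ℝ] Lp ℝ 2 (volume.restrict Ω₂))
    (habsUpos : ∀ f, 0 ≤ f → 0 ≤ absU f)
    (habsU : ∀ f, 0 ≤ f → absU f = |U f|) :
    (U ψ₁ ≠ 0 ∧
      ∀ t ≥ (0:ℝ), S₂ t (U ψ₁) = Real.exp (-(lam₁ * t)) • U ψ₁) ∧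
    ∀ t ≥ (0:ℝ), absU.comp (S₁ t) = (S₂ t).comp absU :=
  stmt_16_general Ω₁ Ω₂ S₁ S₂ hS₂sa hS₁pos hS₂pos lam₁ ψ₁ ψ₂ hψ₁pos hψ₂pos hψ₁eig hψ₂eig U hU0 hUint
    absU habsU
end

section
/- Let Ω₁, Ω₂ ⊆ ℝ^d be open, τ : ℝ^d → ℝ^d a Euclidean isometry with τ(Ω₂) = Ω₁, c > 0, and U : L²(Ω₁) → L²(Ω₂) a bounded linear operator such that the lattice identity |Uf| = c·|f ∘ τ| holds almost everywhere for every f ∈ L²(Ω₁). Then there exists h ∈ L^∞(Ω₂) with |h| = c a.e. such that Uf = h·(f ∘ τ) a.e. for all f ∈ L²(Ω₁). -/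
/-!
Polarization turns the identities `|U(f₀ + s f)| = c |(f₀ + s f) ∘ τ|`, `s ∈ {0, ±1, ±i}`, into
`Uf · conj (Uf₀) = c² (f ∘ τ) · conj (f₀ ∘ τ)` a.e. Choosing `f₀ ∈ L²` nowhere zero (Lebesgue
measure is σ-finite) and dividing gives `Uf = h · (f ∘ τ)` with `h = Uf₀ / (f₀ ∘ τ)`, and
`|h| = c` is the identity for `f₀` itself.
-/

open MeasureTheory Complex
open scoped InnerProductSpace ComplexConjugate ENNReal

theorem inner_eq_sq_mul_inner_of_norm_add_smul_eq {E : Type*} [NormedAddCommGroup E]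
    [InnerProductSpace ℂ E] {a b u v : E} {c : ℝ}
    (h : ∀ s ∈ ({1, -1, I, -I} : Finset ℂ), ‖a + s • b‖ = c * ‖u + s • v‖) :
    ⟪a, b⟫_ℂ = c ^ 2 * ⟪u, v⟫_ℂ := by
  simp only [Finset.mem_insert, Finset.mem_singleton, forall_eq_or_imp, forall_eq,
    one_smul, neg_smul, ← sub_eq_add_neg] at h
  obtain ⟨h₁, h₂, h₃, h₄⟩ := h
  rw [inner_eq_sum_norm_sq_div_four a b, inner_eq_sum_norm_sq_div_four u v]
  simp only [RCLike.I_to_complex, RCLike.ofReal_eq_complex_ofReal, h₁, h₂, h₃, h₄, ofReal_mul]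
  ring

theorem Complex.eq_div_mul_of_norm_add_mul_eq {a b u v : ℂ} {c : ℝ} (hu : u ≠ 0)
    (h : ∀ s ∈ ({0, 1, -1, I, -I} : Finset ℂ), ‖a + s * b‖ = c * ‖u + s * v‖) :
    b = a / u * v := by
  have ha : ‖a‖ = c * ‖u‖ := by simpa using h 0 (by simp)
  have hinner : b * conj a = c ^ 2 * (v * conj u) := by
    simpa only [RCLike.inner_apply, smul_eq_mul] using
      inner_eq_sq_mul_inner_of_norm_add_smul_eq fun s hs ↦ h s (Finset.mem_insert_of_mem hs)
  rcases eq_or_ne a 0 with rfl | ha₀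
  · have hc : c = 0 := by simpa [hu] using ha
    simpa [hc] using h 1 (by simp)
  · have hnorm : conj a * a = c ^ 2 * (conj u * u) := by
      simp only [conj_mul', ha]
      push_cast
      ring
    rw [div_mul_eq_mul_div, eq_div_iff hu]
    refine mul_left_cancel₀ ((map_ne_zero (starRingEnd ℂ)).2 ha₀) ?_
    linear_combination u * hinner - v * hnorm

section

variable {α : Type*} [MeasurableSpace α] {ν : Measure α} {p q : ℝ≥0∞}
  {E : Type*} [AddCommGroup E] [Module ℂ E]

theorem exists_memLp_two_forall_ne_zero (μ : Measure α) [SigmaFinite μ] :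
    ∃ g : α → ℂ, MemLp g 2 μ ∧ ∀ x, g x ≠ 0 := by
  obtain ⟨g, hg_pos, hg_meas, hg_int⟩ :=
    exists_pos_lintegral_lt_of_sigmaFinite μ ENNReal.top_ne_zero
  have hg_meas' : AEStronglyMeasurable (fun x ↦ ((√(g x) : ℝ) : ℂ)) μ :=
    (continuous_ofReal.measurable.comp
      (Real.continuous_sqrt.measurable.comp hg_meas.coe_nnreal_real)).aestronglyMeasurable
  refine ⟨fun x ↦ (√(g x) : ℝ), ?_, fun x ↦ by simpa using (hg_pos x).ne'⟩
  rw [memLp_two_iff_integrable_sq_norm hg_meas']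
  refine (integrable_toReal_of_lintegral_ne_top hg_meas.coe_nnreal_ennreal.aemeasurable
    hg_int.ne).congr (ae_of_all _ fun x ↦ ?_)
  simp

theorem Lp.coeFn_add_smul (f g : Lp ℂ p ν) (s : ℂ) :
    ⇑(f + s • g) =ᵐ[ν] fun y ↦ f y + s * g y := by
  filter_upwards [Lp.coeFn_add f (s • g), Lp.coeFn_smul s g] with y hadd hsmul
  rw [hadd, Pi.add_apply, hsmul, Pi.smul_apply, smul_eq_mul]

theorem Lp.ae_eq_div_mul_of_norm_ae_eq (U : E →ₗ[ℂ] Lp ℂ p ν) (V : E →ₗ[ℂ] Lp ℂ q ν) {c : ℝ}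
    (hUV : ∀ f, ∀ᵐ y ∂ν, ‖U f y‖ = c * ‖V f y‖) {f₀ : E} (hf₀ : ∀ᵐ y ∂ν, V f₀ y ≠ 0)
    (f : E) : ⇑(U f) =ᵐ[ν] ⇑(U f₀) / ⇑(V f₀) * ⇑(V f) := by
  have hcomb : ∀ s : ℂ, ∀ᵐ y ∂ν, ‖U f₀ y + s * U f y‖ = c * ‖V f₀ y + s * V f y‖ := by
    intro s
    filter_upwards [hUV (f₀ + s • f), Lp.coeFn_add_smul (U f₀) (U f) s,
      Lp.coeFn_add_smul (V f₀) (V f) s] with y hy hUy hVy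
    rwa [map_add, map_smul, map_add, map_smul, hUy, hVy] at hy
  filter_upwards [hf₀, (Filter.eventually_all_finset _).2 fun s _ ↦ hcomb s] with y hy hS
  exact Complex.eq_div_mul_of_norm_add_mul_eq hy hS

theorem Lp.exists_ae_eq_mul_of_norm_ae_eq (U : E →ₗ[ℂ] Lp ℂ p ν) (V : E →ₗ[ℂ] Lp ℂ q ν) {c : ℝ}
    (hUV : ∀ f, ∀ᵐ y ∂ν, ‖U f y‖ = c * ‖V f y‖) {f₀ : E} (hf₀ : ∀ᵐ y ∂ν, V f₀ y ≠ 0) :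
    ∃ h : α → ℂ, AEStronglyMeasurable h ν ∧ (∀ᵐ y ∂ν, ‖h y‖ = c) ∧
      ∀ f, ⇑(U f) =ᵐ[ν] h * ⇑(V f) := by
  refine ⟨⇑(U f₀) / ⇑(V f₀),
    (Lp.aestronglyMeasurable (U f₀)).div₀ (Lp.aestronglyMeasurable (V f₀)),
    ?_, Lp.ae_eq_div_mul_of_norm_ae_eq U V hUV hf₀⟩
  filter_upwards [hUV f₀, hf₀] with y hy hy₀
  rw [Pi.div_apply, norm_div, hy, mul_div_assoc, div_self (norm_ne_zero_iff.2 hy₀), mul_one]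

end

theorem IsometryEquiv.measurePreserving_volume {E : Type*} [NormedAddCommGroup E]
    [InnerProductSpace ℝ E] [FiniteDimensional ℝ E] [MeasurableSpace E] [BorelSpace E]
    (τ : E ≃ᵢ E) : MeasurePreserving τ volume volume := by
  have hτ : ⇑τ = (· + τ 0) ∘ τ.toRealLinearIsometryEquiv := by
    ext x
    simp [IsometryEquiv.toRealLinearIsometryEquiv_apply]
  rw [hτ]
  exact (measurePreserving_add_right volume (τ 0)).comp
    τ.toRealLinearIsometryEquiv.measurePreserving

theorem stmt_18_general {d : ℕ} (Ω₁ Ω₂ : Set (EuclideanSpace ℝ (Fin d)))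
    (τ : EuclideanSpace ℝ (Fin d) ≃ᵢ EuclideanSpace ℝ (Fin d))
    (hτ : τ '' Ω₂ = Ω₁) (c : ℝ)
    (U : Lp ℂ 2 (volume.restrict Ω₁) →L[ℂ] Lp ℂ 2 (volume.restrict Ω₂))
    (hU : ∀ f : Lp ℂ 2 (volume.restrict Ω₁),
      ∀ᵐ y ∂(volume.restrict Ω₂), ‖U f y‖ = c * ‖f (τ y)‖) :
    ∃ h : EuclideanSpace ℝ (Fin d) → ℂ,
      AEStronglyMeasurable h (volume.restrict Ω₂) ∧
      (∀ᵐ y ∂(volume.restrict Ω₂), ‖h y‖ = c) ∧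
      ∀ f : Lp ℂ 2 (volume.restrict Ω₁),
        ∀ᵐ y ∂(volume.restrict Ω₂), U f y = h y * f (τ y) := by
  have hτμ : MeasurePreserving τ (volume.restrict Ω₂) (volume.restrict Ω₁) :=
    hτ ▸ τ.measurePreserving_volume.restrict_image_emb τ.toHomeomorph.measurableEmbedding Ω₂
  let V := Lp.compMeasurePreservingₗ (E := ℂ) (p := 2) ℂ τ hτμ
  have hV (f : Lp ℂ 2 (volume.restrict Ω₁)) : ⇑(V f) =ᵐ[volume.restrict Ω₂] fun y ↦ f (τ y) :=
    Lp.coeFn_compMeasurePreserving f hτμ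
  obtain ⟨g, hg, hg₀⟩ := exists_memLp_two_forall_ne_zero (volume.restrict Ω₁)
  have hVg : ∀ᵐ y ∂(volume.restrict Ω₂), V (hg.toLp g) y ≠ 0 := by
    filter_upwards [hV _, hτμ.quasiMeasurePreserving.ae_eq hg.coeFn_toLp] with y hy hgy
    rw [hy]
    exact fun h₀ ↦ hg₀ (τ y) (hgy.symm.trans h₀)
  obtain ⟨h, hh_meas, hh_norm, hUh⟩ := Lp.exists_ae_eq_mul_of_norm_ae_eq U.toLinearMap V
    (fun f ↦ by filter_upwards [hU f, hV f] with y hy hVy; rwa [hVy]) hVg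
  refine ⟨h, hh_meas, hh_norm, fun f ↦ ?_⟩
  filter_upwards [hUh f, hV f] with y hy hVy
  exact hy.trans (by rw [Pi.mul_apply, hVy])

/-- Zaanen's theorem applied: if τ is a Euclidean isometry with τ(Ω₂) = Ω₁,
c > 0, and U : L²(Ω₁) → L²(Ω₂) is bounded linear with |Uf| = c·|f∘τ| a.e.
for all f, then Uf = h·(f∘τ) for an L^∞ multiplier h of constant modulus c. -/
theorem stmt_18 {d : ℕ} (Ω₁ Ω₂ : Set (EuclideanSpace ℝ (Fin d)))
    (h₁ : IsOpen Ω₁) (h₂ : IsOpen Ω₂)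
    (τ : EuclideanSpace ℝ (Fin d) ≃ᵢ EuclideanSpace ℝ (Fin d))
    (hτ : τ '' Ω₂ = Ω₁) (c : ℝ) (hc : 0 < c)
    (U : Lp ℂ 2 (volume.restrict Ω₁) →L[ℂ] Lp ℂ 2 (volume.restrict Ω₂))
    (hU : ∀ f : Lp ℂ 2 (volume.restrict Ω₁),
      ∀ᵐ y ∂(volume.restrict Ω₂), ‖U f y‖ = c * ‖f (τ y)‖) :
    ∃ h : EuclideanSpace ℝ (Fin d) → ℂ,
      AEStronglyMeasurable h (volume.restrict Ω₂) ∧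
      (∀ᵐ y ∂(volume.restrict Ω₂), ‖h y‖ = c) ∧
      ∀ f : Lp ℂ 2 (volume.restrict Ω₁),
        ∀ᵐ y ∂(volume.restrict Ω₂), U f y = h y * f (τ y) :=
  stmt_18_general Ω₁ Ω₂ τ hτ c U hU
end
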